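/- Fix a distribution P over a countable measurable space X and a set A of probability distributions on X with P(P̂_n ∈ A) > 0. Then D(μ_A ‖ P^n) = n·D(ω_A ‖ P) + D(μ_A ‖ ω_A^n), where P^n and ω_A^n are the n-fold product distributions of P and ω_A on X^n. Consequently − ln P(P̂_n ∈ A) = n·D(ω_A ‖ P) + D(μ_A ‖ ω_A^n). -/

import Mathlib

open scoped ENNReal

/-- Relative entropy (KL divergence) `D(Q ‖ R) = E_{y ∼ Q}[ln (Q y / R y)]`
for PMFs on a countable type. -/
noncomputable def klDiv {Y : Type*} (Q R : PMF Y) : ℝ :=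
  ∑' y, (Q y).toReal * Real.log ((Q y).toReal / (R y).toReal)

/-- Cross entropy `H(Q, P) = E_{y ∼ Q}[ln (1 / P y)]`. -/
noncomputable def crossEnt {Y : Type*} (Q P : PMF Y) : ℝ :=
  ∑' y, (Q y).toReal * Real.log (1 / (P y).toReal)

/-- Entropy `H(Q) = E_{y ∼ Q}[ln (1 / Q y)]`. -/
noncomputable def ent {Y : Type*} (Q : PMF Y) : ℝ :=
  ∑' y, (Q y).toReal * Real.log (1 / (Q y).toReal)

/-- The `n`-fold product distribution `P^n` on `X^n`, assigning to each
`y ∈ X^n` the probability `∏ i, P (y i)`. -/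
noncomputable def piPMF {X : Type*} (n : ℕ) (P : PMF X) : PMF (Fin n → X) :=
  ⟨fun y => ∏ i, P (y i), by
    rw [Summable.hasSum_iff ENNReal.summable]
    induction n with
    | zero =>
      rw [tsum_eq_single (default : Fin 0 → X)
        (fun b hb => absurd (Subsingleton.elim b default) hb)]
      simp
    | succ n ih =>
      rw [← (Fin.consEquiv (fun _ : Fin (n+1) => X)).tsum_eq, ENNReal.tsum_prod']
      simp only [Fin.consEquiv_apply, Fin.prod_univ_succ, Fin.cons_zero, Fin.cons_succ]
      simp_rw [ENNReal.tsum_mul_left, ih, mul_one]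
      exact P.tsum_coe⟩

/-- The empirical measure `μ̂_Z` of a sample `Z ∈ X^n`: it assigns probability
`(1/n) · #{i : Z i = u}` to each point `u`, i.e. it is the pushforward of the
uniform distribution on `Fin n` along `Z`. -/
noncomputable def empiricalPMF {X : Type*} (n : ℕ) [NeZero n] (Z : Fin n → X) : PMF X :=
  (PMF.uniformOfFintype (Fin n)).map Z

/-- `P(P̂_n ∈ A)`: the probability, under an i.i.d. sample `Z ∼ P^n`, that the
empirical measure `μ̂_Z` lies in the set `A` of distributions. -/
noncomputable def probIn {X : Type*} (n : ℕ) [NeZero n] (P : PMF X) (A : Set (PMF X)) : ℝ≥0∞ :=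
  (piPMF n P).toOuterMeasure {Z | empiricalPMF n Z ∈ A}

/-- The convex combination `lam • Q₁ + (1 - lam) • Q₂` of two PMFs. -/
noncomputable def mixPMF {Y : Type*} (lam : ℝ≥0∞) (hlam : lam ≤ 1) (Q₁ Q₂ : PMF Y) : PMF Y :=
  ⟨fun y => lam * Q₁ y + (1 - lam) * Q₂ y, by
    rw [Summable.hasSum_iff ENNReal.summable,
      ENNReal.tsum_add, ENNReal.tsum_mul_left,
      ENNReal.tsum_mul_left, Q₁.tsum_coe, Q₂.tsum_coe, mul_one, mul_one,
      add_tsub_cancel_of_le hlam]⟩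

/-- A set of PMFs is convex if it is closed under convex combinations. -/
def IsConvexPMFSet {Y : Type*} (A : Set (PMF Y)) : Prop :=
  ∀ Q₁ ∈ A, ∀ Q₂ ∈ A, ∀ (lam : ℝ≥0∞) (hlam : lam ≤ 1), mixPMF lam hlam Q₁ Q₂ ∈ A

/-! On its support `μ_A` equals `P^n / p` with `p = P(P̂_n ∈ A)`, so `D(μ_A ‖ P^n) = -ln p`.
Pointwise on that support, `ln (μ_A / ω_A^n) = ln (μ_A / P^n) - ∑ᵢ ln (ω_A(yᵢ) / P(yᵢ))`;
integrating against `μ_A`, whose every marginal is `ω_A`, turns the last sum into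
`n · D(ω_A ‖ P)`. All series converge because the densities `μ_A / P^n` and `ω_A / P` are
bounded by `1 / p`. -/

namespace Real

lemma abs_mul_log_div_le {a b C : ℝ} (ha : 0 ≤ a) (hb : 0 ≤ b) (hab : a ≤ C * b) :
    |a * log (a / b)| ≤ a * |log C| + b := by
  rcases ha.eq_or_lt with rfl | ha
  · simpa using hb
  have hb : 0 < b := hb.lt_of_ne fun h => by
    simp only [← h, mul_zero] at hab
    linarith
  have hupper : a * log (a / b) ≤ a * |log C| := by
    refine mul_le_mul_of_nonneg_left ?_ ha.le
    exact (log_le_log (by positivity) ((div_le_iff₀ hb).mpr hab)).trans (le_abs_self _)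
  have hlower : a - b ≤ a * log (a / b) := by
    have := mul_le_mul_of_nonneg_left (one_sub_inv_le_log_of_pos (div_pos ha hb)) ha.le
    rwa [inv_div, mul_sub, mul_one, mul_div_cancel₀ _ ha.ne'] at this
  rw [abs_le]
  constructor <;> nlinarith [abs_nonneg (log C)]

end Real

namespace PMF

variable {α β : Type*}

lemma hasSum_toReal_fiber (q : PMF α) (g : α → β) (b : β) :
    HasSum (fun a : {a // g a = b} => (q a).toReal) ((q.map g) b).toReal := by
  have hfiber : (q.map g) b = ∑' a : {a // g a = b}, q a := by
    rw [← toOuterMeasure_apply_singleton, toOuterMeasure_map_apply, toOuterMeasure_apply,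
      ← tsum_subtype]
    rfl
  rw [hfiber, ENNReal.tsum_toReal_eq fun a : {a // g a = b} => q.apply_ne_top a]
  exact ENNReal.hasSum_toReal (hfiber ▸ (q.map g).apply_ne_top b)

lemma hasSum_toReal_mul_comp (q : PMF α) (g : α → β) {F : β → ℝ}
    (hF : Summable fun b => ((q.map g) b).toReal * F b) :
    HasSum (fun a => (q a).toReal * F (g a)) (∑' b, ((q.map g) b).toReal * F b) := by
  let e := Equiv.sigmaFiberEquiv g
  have hfiber : ∀ (G : β → ℝ) b,
      HasSum (fun a : {a // g a = b} => (q a).toReal * G (g a)) (((q.map g) b).toReal * G b) := by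
    intro G b
    simpa only [fun a : {a // g a = b} => a.2] using (q.hasSum_toReal_fiber g b).mul_right (G b)
  have habs_eq : ∀ a, |(q a).toReal * F (g a)| = (q a).toReal * |F (g a)| := fun a => by
    rw [abs_mul, abs_of_nonneg ENNReal.toReal_nonneg]
  have habs : Summable fun a => |(q a).toReal * F (g a)| := by
    rw [← e.summable_iff]
    refine (summable_sigma_of_nonneg fun _ => abs_nonneg _).mpr ⟨fun b => ?_, ?_⟩
    · simp only [e, Equiv.sigmaFiberEquiv_apply, habs_eq]
      exact (hfiber (|F ·|) b).summable
    · simp only [e, Equiv.sigmaFiberEquiv_apply, habs_eq]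
      refine hF.abs.congr fun b => ?_
      rw [(hfiber (|F ·|) b).tsum_eq, abs_mul, abs_of_nonneg ENNReal.toReal_nonneg]
  have hsum := (e.hasSum_iff.mpr habs.of_abs.hasSum).sigma (hfiber F)
  rw [hsum.tsum_eq]
  exact habs.of_abs.hasSum

lemma tsum_toReal (q : PMF α) : ∑' a, (q a).toReal = 1 := by
  rw [← ENNReal.tsum_toReal_eq q.apply_ne_top, q.tsum_coe, ENNReal.toReal_one]

lemma summable_toReal (q : PMF α) : Summable fun a => (q a).toReal :=
  ENNReal.summable_toReal q.tsum_coe_ne_top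

lemma map_apply_le_mul {q r : PMF α} {c : ℝ≥0∞} (h : ∀ a, q a ≤ c * r a) (g : α → β) (b : β) :
    (q.map g) b ≤ c * (r.map g) b := by
  simp only [map_apply, ← ENNReal.tsum_mul_left]
  refine ENNReal.tsum_le_tsum fun a => ?_
  split_ifs
  exacts [h a, zero_le]

lemma le_map_apply (q : PMF α) (g : α → β) (a : α) : q a ≤ (q.map g) (g a) := by
  rw [map_apply]
  exact le_of_eq_of_le (if_pos rfl).symm (ENNReal.le_tsum a)

lemma toOuterMeasure_singleton_inter (q : PMF α) (s : Set α) (a : α) :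
    q.toOuterMeasure ({a} ∩ s) = s.indicator q a := by
  by_cases ha : a ∈ s <;> simp [ha, toOuterMeasure_apply_singleton]

end PMF

lemma ENNReal.tsum_pi_prod {X : Type*} {n : ℕ} (g : Fin n → X → ℝ≥0∞) :
    ∑' y : Fin n → X, ∏ j, g j (y j) = ∏ j, ∑' u, g j u := by
  induction n with
  | zero => simp
  | succ n ih =>
    rw [← (Fin.consEquiv fun _ => X).tsum_eq, ENNReal.tsum_prod']
    simp only [Fin.consEquiv_apply, Fin.prod_univ_succ, Fin.cons_zero, Fin.cons_succ,
      ENNReal.tsum_mul_left, ih, ENNReal.tsum_mul_right]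

section piPMF

variable {X : Type*} {n : ℕ}

lemma piPMF_apply (P : PMF X) (y : Fin n → X) : piPMF n P y = ∏ i, P (y i) := rfl

lemma piPMF_map_eval (P : PMF X) (i : Fin n) : (piPMF n P).map (fun y => y i) = P := by
  classical
  ext u
  let g : Fin n → X → ℝ≥0∞ := fun j v => if j = i then (if v = u then P u else 0) else P v
  have hterm : ∀ y : Fin n → X, (if u = y i then piPMF n P y else 0) = ∏ j, g j (y j) := by
    intro y
    rw [piPMF_apply, ← Finset.mul_prod_erase _ _ (Finset.mem_univ i),
      ← Finset.mul_prod_erase _ (fun j => g j (y j)) (Finset.mem_univ i),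
      Finset.prod_congr rfl fun j hj => if_neg (Finset.ne_of_mem_erase hj)]
    by_cases h : u = y i
    · simp [g, h]
    · simp [g, h, Ne.symm h]
  have hsum : ∀ j, ∑' v, g j v = if j = i then P u else 1 := by
    intro j
    by_cases hj : j = i <;> simp [g, hj, tsum_ite_eq]
  rw [PMF.map_apply, tsum_congr hterm, ENNReal.tsum_pi_prod,
    Finset.prod_congr rfl fun j _ => hsum j, Finset.prod_ite_eq' Finset.univ i,
    if_pos (Finset.mem_univ i)]

end piPMF

section klDiv

variable {Y : Type*}

noncomputable def klSummand (Q R : PMF Y) (y : Y) : ℝ :=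
  (Q y).toReal * Real.log ((Q y).toReal / (R y).toReal)

lemma klDiv_eq_tsum_klSummand (Q R : PMF Y) : klDiv Q R = ∑' y, klSummand Q R y := rfl

lemma summable_klSummand_of_le_mul {Q R : PMF Y} {c : ℝ≥0∞} (hc : c ≠ ⊤)
    (h : ∀ y, Q y ≤ c * R y) : Summable (klSummand Q R) := by
  refine Summable.of_norm_bounded
    ((Q.summable_toReal.mul_right |Real.log c.toReal|).add R.summable_toReal) fun y =>
      Real.abs_mul_log_div_le ENNReal.toReal_nonneg ENNReal.toReal_nonneg ?_
  rw [← ENNReal.toReal_mul]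
  exact ENNReal.toReal_mono (ENNReal.mul_ne_top hc (R.apply_ne_top y)) (h y)

lemma klDiv_eq_neg_log_of_eq_indicator_div {Q μ : PMF Y} {s : Set Y}
    (hμ : ∀ y, μ y = s.indicator Q y / Q.toOuterMeasure s) :
    klDiv μ Q = -Real.log (Q.toOuterMeasure s).toReal := by
  have hterm : ∀ y, klSummand μ Q y = (μ y).toReal * -Real.log (Q.toOuterMeasure s).toReal := by
    intro y
    by_cases h : μ y = 0
    · simp [klSummand, h]
    have hy : y ∈ s := by
      by_contra hy
      simp [hμ, hy] at h
    have hQ : (Q y).toReal ≠ 0 :=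
      ENNReal.toReal_ne_zero.mpr ⟨fun hQ => by simp [hμ, hQ] at h, Q.apply_ne_top y⟩
    rw [klSummand, hμ y, Set.indicator_of_mem hy, ENNReal.toReal_div, div_div_cancel_left' hQ,
      Real.log_inv]
  rw [klDiv_eq_tsum_klSummand, tsum_congr hterm, tsum_mul_right, μ.tsum_toReal, one_mul]

end klDiv

section chainRule

variable {X : Type*} {n : ℕ}

lemma klSummand_piPMF_eq (μ : PMF (Fin n → X)) (P ω : PMF X) {y : Fin n → X}
    (hP : μ y ≠ 0 → piPMF n P y ≠ 0) (hω : ∀ i, μ y ≤ ω (y i)) :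
    klSummand μ (piPMF n ω) y = klSummand μ (piPMF n P) y -
      ∑ i, (μ y).toReal * Real.log ((ω (y i)).toReal / (P (y i)).toReal) := by
  by_cases hy : μ y = 0
  · simp [klSummand, hy]
  have hμpos : 0 < (μ y).toReal := ENNReal.toReal_pos hy (μ.apply_ne_top y)
  have hPpos : ∀ i, 0 < (P (y i)).toReal := fun i => ENNReal.toReal_pos
    (fun h => hP hy (Finset.prod_eq_zero (Finset.mem_univ i) h)) (P.apply_ne_top _)
  have hωpos : ∀ i, 0 < (ω (y i)).toReal := fun i => ENNReal.toReal_pos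
    (fun h => hy (le_zero_iff.mp (h ▸ hω i))) (ω.apply_ne_top _)
  simp only [klSummand, piPMF_apply, ENNReal.toReal_prod, ← Finset.mul_sum, ← mul_sub]
  rw [Real.log_div hμpos.ne' (Finset.prod_pos fun i _ => hωpos i).ne',
    Real.log_div hμpos.ne' (Finset.prod_pos fun i _ => hPpos i).ne',
    Real.log_prod fun i _ => (hωpos i).ne', Real.log_prod fun i _ => (hPpos i).ne']
  simp only [Real.log_div (hωpos _).ne' (hPpos _).ne', Finset.sum_sub_distrib]
  ring

theorem klDiv_piPMF_eq_add (μ : PMF (Fin n → X)) (P ω : PMF X)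
    (hμP : ∀ y, μ y ≠ 0 → piPMF n P y ≠ 0) (hω : ∀ i, μ.map (fun y => y i) = ω)
    (hμ : Summable (klSummand μ (piPMF n P))) (hωP : Summable (klSummand ω P)) :
    klDiv μ (piPMF n P) = n * klDiv ω P + klDiv μ (piPMF n ω) := by
  have hmarginal : ∀ i, HasSum (fun y => (μ y).toReal *
      Real.log ((ω (y i)).toReal / (P (y i)).toReal)) (klDiv ω P) := by
    intro i
    have := μ.hasSum_toReal_mul_comp (fun y => y i)
      (F := fun u => Real.log ((ω u).toReal / (P u).toReal)) (by rw [hω i]; exact hωP)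
    rwa [hω i] at this
  have hsum :
      HasSum (klSummand μ (piPMF n ω)) (klDiv μ (piPMF n P) - ∑ _i : Fin n, klDiv ω P) := by
    refine (hμ.hasSum.sub (hasSum_sum fun i _ => hmarginal i)).congr_fun fun y => ?_
    exact klSummand_piPMF_eq μ P ω (hμP y) fun i => hω i ▸ μ.le_map_apply _ y
  rw [klDiv_eq_tsum_klSummand μ (piPMF n ω), hsum.tsum_eq, Finset.sum_const, Finset.card_univ,
    Fintype.card_fin, nsmul_eq_mul]
  ring

end chainRule

theorem klDiv_cond_decomposition_general {X : Type*}
    (n : ℕ) [NeZero n] (P : PMF X) (A : Set (PMF X))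
    (hA : 0 < probIn n P A)
    (μA : PMF (Fin n → X))
    (hμA : ∀ y : Fin n → X,
      μA y = (piPMF n P).toOuterMeasure ({y} ∩ {Z | empiricalPMF n Z ∈ A}) / probIn n P A)
    (ωA : PMF X)
    (hωA : ∀ i : Fin n, ωA = μA.map (fun Z => Z i)) :
    klDiv μA (piPMF n P) = (n : ℝ) * klDiv ωA P + klDiv μA (piPMF n ωA) ∧
    - Real.log (probIn n P A).toReal = (n : ℝ) * klDiv ωA P + klDiv μA (piPMF n ωA) := by
  have hcond : ∀ y, μA y =
      {Z | empiricalPMF n Z ∈ A}.indicator (piPMF n P) y / probIn n P A := fun y => by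
    rw [hμA y, PMF.toOuterMeasure_singleton_inter]
  have hμle : ∀ y, μA y ≤ (probIn n P A)⁻¹ * piPMF n P y := fun y => by
    rw [hcond y, div_eq_mul_inv, mul_comm]
    gcongr
    exact Set.indicator_le_self _ _ y
  have hωle : ∀ u, ωA u ≤ (probIn n P A)⁻¹ * P u := fun u => by
    simpa only [← hωA 0, piPMF_map_eval] using PMF.map_apply_le_mul hμle (fun y => y 0) u
  have hinv : (probIn n P A)⁻¹ ≠ ⊤ := ENNReal.inv_ne_top.mpr hA.ne'
  have hdecomp := klDiv_piPMF_eq_add μA P ωA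
    (fun y hy hP => hy (le_zero_iff.mp (by simpa [hP] using hμle y))) (fun i => (hωA i).symm)
    (summable_klSummand_of_le_mul hinv hμle) (summable_klSummand_of_le_mul hinv hωle)
  refine ⟨hdecomp, ?_⟩
  rw [← hdecomp]
  exact (klDiv_eq_neg_log_of_eq_indicator_div hcond).symm

/-- Lemma 4 of the paper:
`D(μ_A ‖ P^n) = n·D(ω_A ‖ P) + D(μ_A ‖ ω_A^n)`, and consequently
`- ln P(P̂_n ∈ A) = n·D(ω_A ‖ P) + D(μ_A ‖ ω_A^n)`. -/
theorem klDiv_cond_decomposition {X : Type*} [Countable X] [MeasurableSpace X] [MeasurableSingletonClass X]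
    (n : ℕ) [NeZero n] (P : PMF X) (A : Set (PMF X))
    (hA : 0 < probIn n P A)
    (μA : PMF (Fin n → X))
    (hμA : ∀ y : Fin n → X,
      μA y = (piPMF n P).toOuterMeasure ({y} ∩ {Z | empiricalPMF n Z ∈ A}) / probIn n P A)
    (ωA : PMF X)
    (hωA : ∀ i : Fin n, ωA = μA.map (fun Z => Z i)) :
    klDiv μA (piPMF n P) = (n : ℝ) * klDiv ωA P + klDiv μA (piPMF n ωA) ∧
    - Real.log (probIn n P A).toReal = (n : ℝ) * klDiv ωA P + klDiv μA (piPMF n ωA) :=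
  klDiv_cond_decomposition_general n P A hA μA hμA ωA hωA
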